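/- arXiv:1006.4131 — 2 statements merged into one kernel-verified Lean document; each statement's English description precedes it below -/
import Mathlib

section
/- Let a ≤ b be reals and let δ : ℝ → ℝ assign to each point of [a,b] a strictly positive radius. Then there exist a finite partition a = x₀ ≤ x₁ ≤ ⋯ ≤ xₙ = b and tags t₁,…,tₙ with tᵢ ∈ [xᵢ₋₁, xᵢ] such that each subinterval [xᵢ₋₁, xᵢ] is contained in the open interval (tᵢ − δ(tᵢ), tᵢ + δ(tᵢ)). -/
open Set

def HasFinePartition (δ : ℝ → ℝ) (a c : ℝ) : Prop :=
  ∃ (n : ℕ) (x : ℕ → ℝ) (t : ℕ → ℝ),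
    x 0 = a ∧ x n = c ∧ (∀ i < n, x i ≤ x (i + 1)) ∧
    ∀ i < n, t i ∈ Icc (x i) (x (i + 1)) ∧
      Icc (x i) (x (i + 1)) ⊆ Ioo (t i - δ (t i)) (t i + δ (t i))

namespace HasFinePartition

variable {δ : ℝ → ℝ} {a c d s τ : ℝ}

theorem refl (δ : ℝ → ℝ) (a : ℝ) : HasFinePartition δ a a :=
  ⟨0, fun _ => a, fun _ => a, rfl, rfl, by simp, by simp⟩

theorem snoc (h : HasFinePartition δ a c) (hcd : c ≤ d) (hτ : τ ∈ Icc c d)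
    (hfine : Icc c d ⊆ Ioo (τ - δ τ) (τ + δ τ)) : HasFinePartition δ a d := by
  obtain ⟨n, x, t, hx0, hxn, hmono, htag⟩ := h
  have hx : ∀ i ≤ n, Function.update x (n + 1) d i = x i := fun i hi =>
    Function.update_of_ne (by omega) _ _
  refine ⟨n + 1, Function.update x (n + 1) d, Function.update t n τ,
    by rw [hx 0 n.zero_le, hx0], Function.update_self .., fun i hi => ?_, fun i hi => ?_⟩
  · rcases Nat.lt_succ_iff_lt_or_eq.mp hi with hi | rfl
    · rw [hx i hi.le, hx (i + 1) hi]
      exact hmono i hi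
    · rw [hx i le_rfl, Function.update_self, hxn]
      exact hcd
  · rcases Nat.lt_succ_iff_lt_or_eq.mp hi with hi | rfl
    · rw [hx i hi.le, hx (i + 1) hi, Function.update_of_ne hi.ne]
      exact htag i hi
    · rw [hx i le_rfl, Function.update_self, Function.update_self, hxn]
      exact ⟨hτ, hfine⟩

theorem extend (h : HasFinePartition δ a c) (hc : c ∈ Ioc (s - δ s) s)
    (hd : d ∈ Ico s (s + δ s)) : HasFinePartition δ a d :=
  h.snoc (hc.2.trans hd.1) ⟨hc.2, hd.1⟩ fun _ hy =>
    ⟨by linarith [hc.1, hy.1], by linarith [hd.2, hy.2]⟩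

end HasFinePartition

/-- Real induction: the supremum `s` of the reachable points of `[a, b]` is reachable from a
point in `(s - δ s, s]`, hence everything in `[s, s + δ s)` is reachable, which forces `s = b`. -/
theorem hasFinePartition_of_le {δ : ℝ → ℝ} {a b : ℝ} (hab : a ≤ b)
    (hδ : ∀ x ∈ Icc a b, 0 < δ x) : HasFinePartition δ a b := by
  set S := {c ∈ Icc a b | HasFinePartition δ a c}
  have haS : a ∈ S := ⟨left_mem_Icc.mpr hab, .refl δ a⟩
  have hbdd : BddAbove S := ⟨b, fun c hc => hc.1.2⟩
  set s := sSup S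
  have hs : s ∈ Icc a b := ⟨le_csSup hbdd haS, csSup_le ⟨a, haS⟩ fun c hc => hc.1.2⟩
  have hδs := hδ s hs
  obtain ⟨c, hcS, hsc⟩ := exists_lt_of_lt_csSup ⟨a, haS⟩ (sub_lt_self s hδs)
  have hc : c ∈ Ioc (s - δ s) s := ⟨hsc, le_csSup hbdd hcS⟩
  have hsb : s = b := by
    by_contra hne
    have hsd : s < min b (s + δ s / 2) := lt_min (hs.2.lt_of_ne hne) (by linarith)
    have hdS : min b (s + δ s / 2) ∈ S :=
      ⟨⟨hs.1.trans hsd.le, min_le_left ..⟩,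
        hcS.2.extend hc ⟨hsd.le, (min_le_right ..).trans_lt (by linarith)⟩⟩
    exact hsd.not_ge (le_csSup hbdd hdS)
  exact hcS.2.extend hc ⟨hsb.le, by linarith⟩

/-- Cousin's theorem: given a positive radius δ(x) at each point of [a,b],
there is a finite tagged partition a = x₀ ≤ x₁ ≤ ⋯ ≤ xₙ = b with tags
tᵢ ∈ [xᵢ, xᵢ₊₁] such that each subinterval [xᵢ, xᵢ₊₁] is contained in the
open interval (tᵢ − δ(tᵢ), tᵢ + δ(tᵢ)). -/
theorem cousin (a b : ℝ) (hab : a ≤ b) (δ : ℝ → ℝ)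
    (hδ : ∀ x ∈ Set.Icc a b, 0 < δ x) :
    ∃ (n : ℕ) (x : ℕ → ℝ) (t : ℕ → ℝ),
      x 0 = a ∧ x n = b ∧ (∀ i < n, x i ≤ x (i + 1)) ∧
      ∀ i < n, t i ∈ Set.Icc (x i) (x (i + 1)) ∧
        Set.Icc (x i) (x (i + 1)) ⊆ Set.Ioo (t i - δ (t i)) (t i + δ (t i)) :=
  hasFinePartition_of_le hab hδ
end

section
/- Let f(x,y) be continuous and bounded on an open domain G ⊆ ℝ². Then for each point (x₀, y₀) ∈ G there exist ε > 0 and a differentiable function y defined on (x₀ − ε, x₀ + ε) with y(x₀) = y₀ and y′(x) = f(x, y(x)) for all x in (x₀ − ε, x₀ + ε). -/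
/-!
Replace `f` by a bounded continuous `g` on the whole plane that agrees with `f` on a closed square
around `(x₀, y₀)` (Tietze). The inf-convolutions `gₙ p = ⨅ q, g q + n * dist p q` are
`n`-Lipschitz, bounded by the same constant `C`, and converge to `g` locally uniformly, so
Picard–Lindelöf gives solutions `uₙ` of `u' = gₙ(t, u)`. These are all `C`-Lipschitz, so by
Arzelà–Ascoli a subsequence converges uniformly; dominated convergence passes the integral
equation `uₙ x = y₀ + ∫ gₙ(t, uₙ t)` to the limit. The slope bound `C` keeps the graph of the
solution inside the square for `|x - x₀| < ε` with `C * ε` at most its half-side.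
-/

open Set Metric Filter Topology Function
open scoped NNReal BoundedContinuousFunction

section LipschitzEnvelope

variable {X : Type*} [PseudoMetricSpace X] {g : X → ℝ}

noncomputable def lipschitzEnvelope (g : X → ℝ) (K : ℝ≥0) (x : X) : ℝ :=
  ⨅ q, g q + K * dist x q

lemma bddBelow_range_add_mul_dist (hg : BddBelow (range g)) (K : ℝ≥0) (x : X) :
    BddBelow (range fun q => g q + K * dist x q) := by
  obtain ⟨c, hc⟩ := hg
  refine ⟨c, ?_⟩
  rintro _ ⟨q, rfl⟩
  have := hc (mem_range_self q)
  dsimp only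
  nlinarith [dist_nonneg (x := x) (y := q), K.2]

lemma lipschitzEnvelope_le (hg : BddBelow (range g)) (K : ℝ≥0) (x : X) :
    lipschitzEnvelope g K x ≤ g x := by
  unfold lipschitzEnvelope
  simpa using ciInf_le (bddBelow_range_add_mul_dist hg K x) x

lemma lipschitzWith_lipschitzEnvelope (hg : BddBelow (range g)) (K : ℝ≥0) :
    LipschitzWith K (lipschitzEnvelope g K) := by
  refine LipschitzWith.of_le_add_mul K fun x x' => ?_
  have : Nonempty X := ⟨x⟩
  rw [← sub_le_iff_le_add]
  refine le_ciInf fun q => sub_le_iff_le_add.2 ?_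
  calc lipschitzEnvelope g K x ≤ g q + K * dist x q :=
        ciInf_le (bddBelow_range_add_mul_dist hg K x) q
    _ ≤ g q + K * dist x' q + K * dist x x' := by
        nlinarith [dist_triangle x x' q, dist_comm x x', K.2]

lemma abs_lipschitzEnvelope_le {C : ℝ} (hC : ∀ x, |g x| ≤ C) (K : ℝ≥0) (x : X) :
    |lipschitzEnvelope g K x| ≤ C := by
  have : Nonempty X := ⟨x⟩
  have hg : BddBelow (range g) := ⟨-C, by rintro _ ⟨q, rfl⟩; exact (abs_le.1 (hC q)).1⟩
  refine abs_le.2 ⟨le_ciInf fun q => ?_, (lipschitzEnvelope_le hg K x).trans (le_of_abs_le (hC x))⟩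
  nlinarith [(abs_le.1 (hC q)).1, dist_nonneg (x := x) (y := q), K.2]

/-- Far from `x` the penalty `K * dist x q` outweighs the oscillation `2 * C` of `g`. -/
lemma sub_le_lipschitzEnvelope {C : ℝ} (hC : ∀ x, |g x| ≤ C) {x : X} {K : ℝ≥0} {ρ δ : ℝ}
    (hK : 2 * C ≤ K * ρ) (hδ : 0 ≤ δ) (hρ : ∀ q, dist x q < ρ → g x - δ ≤ g q) :
    g x - δ ≤ lipschitzEnvelope g K x := by
  have : Nonempty X := ⟨x⟩
  refine le_ciInf fun q => ?_
  rcases lt_or_ge (dist x q) ρ with hq | hq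
  · nlinarith [hρ q hq, dist_nonneg (x := x) (y := q), K.2]
  · nlinarith [(abs_le.1 (hC q)).1, (abs_le.1 (hC x)).2, mul_le_mul_of_nonneg_left hq K.2]

lemma tendstoLocallyUniformly_lipschitzEnvelope (hg : Continuous g) {C : ℝ}
    (hC : ∀ x, |g x| ≤ C) {ι : Type*} {l : Filter ι} {K : ι → ℝ≥0} (hK : Tendsto K l atTop) :
    TendstoLocallyUniformly (fun i => lipschitzEnvelope g (K i)) g l := by
  have hbdd : BddBelow (range g) := ⟨-C, by rintro _ ⟨q, rfl⟩; exact (abs_le.1 (hC q)).1⟩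
  rw [Metric.tendstoLocallyUniformly_iff]
  intro δ hδ x
  obtain ⟨ρ, hρ, hx⟩ := Metric.continuousAt_iff.1 hg.continuousAt (δ / 4) (by positivity)
  refine ⟨ball x (ρ / 2), ball_mem_nhds x (half_pos hρ), ?_⟩
  filter_upwards [hK.eventually_ge_atTop (4 * C / ρ).toNNReal] with i hi p hp
  have hKi : 2 * C ≤ K i * (ρ / 2) := by
    have := (div_le_iff₀ hρ).1 ((Real.toNNReal_le_iff_le_coe.1 hi))
    linarith
  have hnear : ∀ q, dist p q < ρ / 2 → g p - δ / 2 ≤ g q := by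
    intro q hq
    have h1 := hx (lt_trans (mem_ball.1 hp) (half_lt_self hρ))
    have h2 := hx (show dist q x < ρ by linarith [dist_triangle_left q x p, mem_ball.1 hp])
    rw [Real.dist_eq] at h1 h2
    linarith [abs_lt.1 h1, abs_lt.1 h2]
  have hlow := sub_le_lipschitzEnvelope hC hKi (by positivity) hnear
  rw [Real.dist_eq, abs_of_nonneg (sub_nonneg.2 (lipschitzEnvelope_le hbdd _ p))]
  linarith

end LipschitzEnvelope

theorem exists_strictMono_tendstoUniformlyOn_of_lipschitzOnWith {X E : Type*}
    [PseudoMetricSpace X] [MetricSpace E] {s : Set X} (hs : IsCompact s) {t : Set E}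
    (ht : IsCompact t) {K : ℝ≥0} {f : ℕ → X → E} (hf : ∀ n, LipschitzOnWith K (f n) s)
    (hft : ∀ n, MapsTo (f n) s t) :
    ∃ φ : ℕ → ℕ, StrictMono φ ∧ ∃ y : X → E, TendstoUniformlyOn (fun k => f (φ k)) y atTop s := by
  have : CompactSpace s := isCompact_iff_compactSpace.1 hs
  let F : ℕ → s →ᵇ E := fun n =>
    .mkOfCompact ⟨s.domRestrict (f n), (lipschitzOnWith_iff_restrict.1 (hf n)).continuous⟩
  have hequi : Equicontinuous ((↑) : range F → s → E) := by
    refine (LipschitzWith.uniformEquicontinuous _ K ?_).equicontinuous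
    rintro ⟨_, n, rfl⟩
    exact lipschitzOnWith_iff_restrict.1 (hf n)
  obtain ⟨Y, -, φ, hφ, hY⟩ := (BoundedContinuousFunction.arzela_ascoli t ht (range F)
    (by rintro _ x ⟨n, rfl⟩; exact hft n x.2) hequi).tendsto_subseq
    fun n => subset_closure (mem_range_self n)
  refine ⟨φ, hφ, Function.extend Subtype.val Y (f 0), ?_⟩
  rw [tendstoUniformlyOn_iff_tendstoUniformly_comp_coe, Function.extend_comp Subtype.val_injective]
  exact BoundedContinuousFunction.tendsto_iff_tendstoUniformly.1 hY

section ODE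

variable {E : Type*} [NormedAddCommGroup E] [NormedSpace ℝ E] {a b x₀ : ℝ}

theorem exists_forall_mem_Icc_hasDerivWithinAt_of_lipschitzWith [CompleteSpace E]
    {g : ℝ × E → E} {K : ℝ≥0} (hg : LipschitzWith K g) {C : ℝ≥0} (hC : ∀ p, ‖g p‖ ≤ C)
    (hx₀ : x₀ ∈ Icc a b) (y₀ : E) :
    ∃ y : ℝ → E, y x₀ = y₀ ∧ ∀ t ∈ Icc a b, HasDerivWithinAt y (g (t, y t)) (Icc a b) t := by
  have hPL : IsPicardLindelof (curry g) (⟨x₀, hx₀⟩ : Icc a b) y₀ (C * (b - a).toNNReal) 0 C K :=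
    { lipschitzOnWith := fun t _ =>
        (mul_one K ▸ hg.comp (LipschitzWith.prodMk_left t)).lipschitzOnWith
      continuousOn := fun y _ => (hg.continuous.comp (.prodMk_left y)).continuousOn
      norm_le := fun t _ y _ => hC (t, y)
      mul_max_le := by
        have : max (b - x₀) (x₀ - a) ≤ b - a := max_le (by linarith [hx₀.1]) (by linarith [hx₀.2])
        simp only [NNReal.coe_mul, Real.coe_toNNReal _ (by linarith [hx₀.1, hx₀.2] : 0 ≤ b - a),
          NNReal.coe_zero, sub_zero]
        gcongr }
  exact hPL.exists_eq_forall_mem_Icc_hasDerivWithinAt₀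

theorem tendsto_picard_of_tendstoLocallyUniformly {ι : Type*} {l : Filter ι}
    [l.IsCountablyGenerated] [l.NeBot] {F : ι → ℝ × E → E} {g : ℝ × E → E}
    (hF : TendstoLocallyUniformly F g l) (hFc : ∀ i, Continuous (F i)) {C : ℝ}
    (hC : ∀ i p, ‖F i p‖ ≤ C) {u : ι → ℝ → E} {y : ℝ → E} {x : ℝ}
    (hu : ∀ i, ContinuousOn (u i) (uIcc x₀ x))
    (huy : ∀ t ∈ uIcc x₀ x, Tendsto (fun i => u i t) l (𝓝 (y t))) (y₀ : E) :
    Tendsto (fun i => ODE.picard (curry (F i)) x₀ y₀ (u i) x) l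
      (𝓝 (ODE.picard (curry g) x₀ y₀ y x)) := by
  have hg : Continuous g := hF.continuous (Eventually.of_forall hFc).frequently
  refine tendsto_const_nhds.add <|
    intervalIntegral.tendsto_integral_filter_of_dominated_convergence (fun _ => C) ?_ ?_
      intervalIntegrable_const ?_
  · refine Eventually.of_forall fun i => ?_
    exact ((hFc i).comp_continuousOn (continuousOn_id.prodMk (hu i))).mono uIoc_subset_uIcc
      |>.aestronglyMeasurable measurableSet_uIoc
  · exact Eventually.of_forall fun i => .of_forall fun t _ => hC i _
  · refine .of_forall fun t ht => ?_
    exact hF.tendsto_comp hg.continuousAt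
      (tendsto_const_nhds.prodMk_nhds (huy t (uIoc_subset_uIcc ht)))

theorem lipschitzOnWith_of_forall_hasDerivWithinAt {g : ℝ × E → E} {C : ℝ≥0}
    (hC : ∀ p, ‖g p‖ ≤ C) {y : ℝ → E} {s : Set ℝ} (hs : Convex ℝ s)
    (hy : ∀ t ∈ s, HasDerivWithinAt y (g (t, y t)) s t) : LipschitzOnWith C y s :=
  hs.lipschitzOnWith_of_nnnorm_hasDerivWithin_le hy fun t _ => hC (t, y t)

end ODE

theorem exists_forall_mem_Icc_hasDerivWithinAt_of_continuous {g : ℝ × ℝ → ℝ}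
    (hg : Continuous g) {C : ℝ≥0} (hC : ∀ p, ‖g p‖ ≤ C) {a b x₀ : ℝ} (hx₀ : x₀ ∈ Icc a b)
    (y₀ : ℝ) :
    ∃ y : ℝ → ℝ, y x₀ = y₀ ∧ ∀ t ∈ Icc a b, HasDerivWithinAt y (g (t, y t)) (Icc a b) t := by
  have hbdd : BddBelow (range g) := ⟨-C, by rintro _ ⟨q, rfl⟩; exact (abs_le.1 (hC q)).1⟩
  have hgₙ : ∀ n : ℕ, ∀ p, ‖lipschitzEnvelope g n p‖ ≤ C := fun n => abs_lipschitzEnvelope_le hC n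
  choose u hu₀ hu using fun n : ℕ => exists_forall_mem_Icc_hasDerivWithinAt_of_lipschitzWith
    (lipschitzWith_lipschitzEnvelope hbdd n) (hgₙ n) hx₀ y₀
  have hlip n : LipschitzOnWith C (u n) (Icc a b) :=
    lipschitzOnWith_of_forall_hasDerivWithinAt (hgₙ n) (convex_Icc a b) (hu n)
  have hmaps n : MapsTo (u n) (Icc a b) (closedBall y₀ (C * (b - a))) := fun t ht => by
    rw [mem_closedBall, ← hu₀ n]
    exact ((hlip n).dist_le_mul t ht x₀ hx₀).trans (by gcongr; exact Real.dist_le_of_mem_Icc ht hx₀)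
  obtain ⟨φ, hφ, y, hy⟩ := exists_strictMono_tendstoUniformlyOn_of_lipschitzOnWith isCompact_Icc
    (isCompact_closedBall _ _) hlip hmaps
  have hyc : ContinuousOn y (Icc a b) :=
    hy.continuousOn (Frequently.of_forall fun k => (hlip _).continuousOn)
  have hy_picard : ∀ x ∈ Icc a b, y x = ODE.picard (curry g) x₀ y₀ y x := by
    intro x hx
    have hsub := uIcc_subset_Icc hx₀ hx
    refine tendsto_nhds_unique (hy.tendsto_at hx) ?_
    refine (tendsto_picard_of_tendstoLocallyUniformly
      (tendstoLocallyUniformly_lipschitzEnvelope hg hC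
        (tendsto_natCast_atTop_atTop.comp hφ.tendsto_atTop))
      (fun k => (lipschitzWith_lipschitzEnvelope hbdd _).continuous) (fun k => hgₙ (φ k))
      (fun k => (hlip (φ k)).continuousOn.mono hsub) (fun t ht => hy.tendsto_at (hsub ht)) y₀).congr
      fun k => ?_
    rw [← hu₀ (φ k)]
    exact ODE.picard_eq_of_hasDerivAt (u := univ)
      (lipschitzWith_lipschitzEnvelope hbdd _).continuous.continuousOn
      (fun t ht => (hu _ t (hsub ht)).mono hsub) (mapsTo_univ _ _)
  refine ⟨ODE.picard (curry g) x₀ y₀ y, ODE.picard_apply₀, fun t ht => ?_⟩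
  rw [← hy_picard t ht]
  exact ODE.hasDerivWithinAt_picard_Icc (f := curry g) (u := univ) hx₀ hg.continuousOn hyc
    (fun _ _ => mem_univ _) y₀ ht

theorem ContinuousOn.exists_continuous_eqOn_forall_abs_le {Y : Type*} [TopologicalSpace Y]
    [NormalSpace Y] {s : Set Y} (hs : IsClosed s) {f : Y → ℝ} (hf : ContinuousOn f s) {M : ℝ}
    (hM0 : 0 ≤ M) (hM : ∀ y ∈ s, |f y| ≤ M) :
    ∃ g : Y → ℝ, Continuous g ∧ EqOn g f s ∧ ∀ y, |g y| ≤ M := by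
  obtain ⟨g, hgM, hgf⟩ := ContinuousMap.exists_restrict_eq_forall_mem_of_closed
    ⟨s.domRestrict f, hf.domRestrict⟩ (t := Icc (-M) M) (fun y => abs_le.1 (hM y y.2))
    ⟨0, by simpa using hM0⟩ hs
  exact ⟨g, g.continuous, fun y hy => congr($hgf ⟨y, hy⟩), fun y => abs_le.2 (hgM y)⟩

/-- Peano's existence theorem: if f is continuous and bounded on an open
domain G ⊆ ℝ², then through each point (x₀, y₀) of G there passes at least one
integral curve of dy/dx = f(x, y). -/
theorem peano_existence (G : Set (ℝ × ℝ)) (hG : IsOpen G) (f : ℝ × ℝ → ℝ)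
    (hcont : ContinuousOn f G) (hbdd : ∃ M : ℝ, ∀ p ∈ G, |f p| ≤ M)
    (x₀ y₀ : ℝ) (hmem : (x₀, y₀) ∈ G) :
    ∃ ε > 0, ∃ y : ℝ → ℝ, y x₀ = y₀ ∧
      ∀ x ∈ Set.Ioo (x₀ - ε) (x₀ + ε),
        (x, y x) ∈ G ∧ HasDerivAt y (f (x, y x)) x := by
  obtain ⟨M, hM⟩ := hbdd
  lift M to ℝ≥0 using (abs_nonneg _).trans (hM _ hmem)
  obtain ⟨r, hr, hball⟩ := Metric.isOpen_iff.1 hG _ hmem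
  have hSG : closedBall (x₀, y₀) (r / 2) ⊆ G :=
    (closedBall_subset_ball (half_lt_self hr)).trans hball
  obtain ⟨g, hgc, hgf, hgM⟩ := (hcont.mono hSG).exists_continuous_eqOn_forall_abs_le
    isClosed_closedBall M.2 fun p hp => hM p (hSG hp)
  set ε := r / 2 / (M + 1)
  have hε : 0 < ε := by positivity
  have hMε : M * ε ≤ r / 2 := by
    rw [mul_div_assoc', div_le_iff₀ (by positivity)]
    nlinarith
  have hx₀ : x₀ ∈ Icc (x₀ - ε) (x₀ + ε) := ⟨by linarith, by linarith⟩
  obtain ⟨y, hy₀, hy⟩ :=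
    exists_forall_mem_Icc_hasDerivWithinAt_of_continuous hgc hgM hx₀ y₀
  refine ⟨ε, hε, y, hy₀, fun x hx => ?_⟩
  have hxε : dist x x₀ ≤ ε := by rw [Real.dist_eq, abs_le]; constructor <;> linarith [hx.1, hx.2]
  have hxS : (x, y x) ∈ closedBall (x₀, y₀) (r / 2) := by
    refine max_le (hxε.trans ?_) ?_
    · exact div_le_self (half_pos hr).le (by linarith)
    · rw [← hy₀]
      calc dist (y x) (y x₀) ≤ M * dist x x₀ :=
            (lipschitzOnWith_of_forall_hasDerivWithinAt hgM (convex_Icc _ _) hy).dist_le_mul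
              x (Ioo_subset_Icc_self hx) x₀ hx₀
        _ ≤ r / 2 := (mul_le_mul_of_nonneg_left hxε M.2).trans hMε
  refine ⟨hSG hxS, ?_⟩
  rw [← hgf hxS]
  exact (hy x (Ioo_subset_Icc_self hx)).hasDerivAt (Icc_mem_nhds hx.1 hx.2)
end
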